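/- Any finite product of operators of the form V_{a,b} (where the different factors may involve tuples of different lengths) is either zero or again of the form V_{c,d} for some k ∈ ℕ and c, d ∈ ℝᵏ. -/

import Mathlib

/-!
The product `V_{a,b} V_{c,d}` sends `ξ` to
`x ↦ 1[x ∈ X_b, f_{a,b} x ∈ X_d] · ξ (f_{c,d} (f_{a,b} x))`.
If `a` and `d` disagree at a common index, the indicator vanishes identically. Otherwise the longer
of the tuples `a`, `d` absorbs the shorter one: for `|d| ≤ |a|` the product is `V_{c',b}` with `c'`
equal to `c` followed by the tail of `a`, and for `|a| ≤ |d|` it is `V_{c,b'}` with `b'` equal to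
`b` followed by the tail of `d`. Induction on the number of factors finishes the proof.
-/

open scoped Classical

noncomputable section

/-- The set of real sequences. -/
abbrev X : Type := ℕ → ℝ

/-- The Hilbert space `ℓ²(X)`. -/
abbrev H : Type := lp (fun _ : X => ℂ) 2

/-- `Xa a` is the set of sequences extending the `n`-tuple `a`. -/
def Xa {n : ℕ} (a : Fin n → ℝ) : Set X := {x | ∀ i : Fin n, x i = a i}

/-- Replace the initial segment of `x` by the tuple `a` (this is `f_{a,b}` for any `b`). -/
def repl {n : ℕ} (a : Fin n → ℝ) (x : X) : X := fun i => if h : i < n then a ⟨i, h⟩ else x i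

/-- `V` is the family of partial isometries `V_{a,b}`. -/
def IsVFamily (V : ∀ n : ℕ, (Fin n → ℝ) → (Fin n → ℝ) → (H →L[ℂ] H)) : Prop :=
  ∀ (n : ℕ) (a b : Fin n → ℝ) (ξ : H) (x : X),
    V n a b ξ x = if x ∈ Xa b then ξ (repl a x) else 0

def Agree {n m : ℕ} (a : Fin n → ℝ) (d : Fin m → ℝ) : Prop :=
  ∀ (i : ℕ) (hn : i < n) (hm : i < m), a ⟨i, hn⟩ = d ⟨i, hm⟩

def splice {m n : ℕ} (c : Fin m → ℝ) (a : Fin n → ℝ) : Fin n → ℝ :=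
  fun i => if h : (i : ℕ) < m then c ⟨i, h⟩ else a i

section Repl

variable {m n : ℕ}

lemma repl_repl_of_le (c : Fin m → ℝ) (a : Fin n → ℝ) (x : X) (h : m ≤ n) :
    repl c (repl a x) = repl (splice c a) x := by
  funext j
  simp only [repl, splice]
  split_ifs <;> first | rfl | omega

lemma repl_repl_of_ge (c : Fin m → ℝ) (a : Fin n → ℝ) (x : X) (h : n ≤ m) :
    repl c (repl a x) = repl c x := by
  funext j
  simp only [repl]
  split_ifs <;> first | rfl | omega

lemma Agree.of_repl_mem_Xa {a : Fin n → ℝ} {d : Fin m → ℝ} {x : X} (hx : repl a x ∈ Xa d) :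
    Agree a d := fun i hn hm => by
  simpa [repl, hn] using hx ⟨i, hm⟩

lemma repl_mem_Xa_of_le {a : Fin n → ℝ} {d : Fin m → ℝ} (had : Agree a d) (h : m ≤ n) (x : X) :
    repl a x ∈ Xa d := fun i => by
  simpa [repl, i.2.trans_le h] using had i (i.2.trans_le h) i.2

lemma mem_Xa_and_repl_mem_Xa_iff_of_ge {b a : Fin n → ℝ} {d : Fin m → ℝ} {x : X} (h : n ≤ m) :
    x ∈ Xa b ∧ repl a x ∈ Xa d ↔ Agree a d ∧ x ∈ Xa (splice b d) := by
  constructor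
  · rintro ⟨hb, hd⟩
    refine ⟨.of_repl_mem_Xa hd, fun i => ?_⟩
    by_cases hi : (i : ℕ) < n
    · simpa [splice, hi] using hb ⟨i, hi⟩
    · simpa [splice, repl, hi] using hd i
  · rintro ⟨had, hx⟩
    refine ⟨fun i => ?_, fun i => ?_⟩
    · simpa [splice, i.2] using hx ⟨i, i.2.trans_le h⟩
    · by_cases hi : (i : ℕ) < n
      · simpa [repl, hi] using had i hi i.2
      · simpa [splice, repl, hi] using hx i

end Repl

namespace IsVFamily

variable {V : ∀ n : ℕ, (Fin n → ℝ) → (Fin n → ℝ) → (H →L[ℂ] H)}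
  {m n : ℕ} {a b : Fin n → ℝ} {c d : Fin m → ℝ}

lemma mul_apply (hV : IsVFamily V) (ξ : H) (x : X) :
    (V n a b * V m c d) ξ x =
      if x ∈ Xa b ∧ repl a x ∈ Xa d then ξ (repl c (repl a x)) else 0 := by
  rw [mul_apply_eq_comp, hV, hV, ite_and]

lemma mul_eq_zero (hV : IsVFamily V) (had : ¬ Agree a d) : V n a b * V m c d = 0 := by
  ext ξ x
  rw [hV.mul_apply, if_neg fun hx => had (.of_repl_mem_Xa hx.2)]
  rfl

lemma mul_eq_of_le (hV : IsVFamily V) (had : Agree a d) (h : m ≤ n) :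
    V n a b * V m c d = V n (splice c a) b := by
  ext ξ x
  simp only [hV.mul_apply, hV n, repl_mem_Xa_of_le had h, and_true, repl_repl_of_le c a x h]

lemma mul_eq_of_ge (hV : IsVFamily V) (had : Agree a d) (h : n ≤ m) :
    V n a b * V m c d = V m c (splice b d) := by
  ext ξ x
  simp only [hV.mul_apply, hV m, mem_Xa_and_repl_mem_Xa_iff_of_ge h, had, true_and,
    repl_repl_of_ge c a x h]

lemma mul_eq_zero_or (hV : IsVFamily V) :
    V n a b * V m c d = 0 ∨ ∃ (k : ℕ) (c' d' : Fin k → ℝ), V n a b * V m c d = V k c' d' := by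
  by_cases had : Agree a d
  · rcases le_total m n with h | h
    · exact .inr ⟨n, _, _, hV.mul_eq_of_le had h⟩
    · exact .inr ⟨m, _, _, hV.mul_eq_of_ge had h⟩
  · exact .inl (hV.mul_eq_zero had)

end IsVFamily

/-- any finite (nonempty) product of operators of the form `V_{a,b}` (possibly with
tuples of different lengths) is either zero or again of the form `V_{c,d}`. -/
theorem stmt6 (V : ∀ n : ℕ, (Fin n → ℝ) → (Fin n → ℝ) → (H →L[ℂ] H)) (hV : IsVFamily V)
    (L : List (H →L[ℂ] H)) (hL : ∀ W ∈ L, ∃ (n : ℕ) (a b : Fin n → ℝ), W = V n a b)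
    (hne : L ≠ []) :
    L.prod = 0 ∨ ∃ (k : ℕ) (c d : Fin k → ℝ), L.prod = V k c d := by
  induction L with
  | nil => exact absurd rfl hne
  | cons W T ih =>
    obtain ⟨n, a, b, rfl⟩ := hL W List.mem_cons_self
    rcases eq_or_ne T [] with rfl | hT
    · exact .inr ⟨n, a, b, List.prod_singleton⟩
    rw [List.prod_cons]
    rcases ih (fun W' hW' => hL W' (List.mem_cons_of_mem _ hW')) hT with h0 | ⟨k, c, d, hT⟩
    · exact .inl (by rw [h0, mul_zero])
    · exact hT ▸ hV.mul_eq_zero_or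

end
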